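/- arXiv:1701.05325 — 3 statements merged into one kernel-verified Lean document; each statement's English description precedes it below -/
import Mathlib

section
/- Suppose Σ = X'X is diagonal and φ ∈ ℝ^{p×d} has i.i.d. N(0,1/d) entries. Then T = E_φ[φ(φ'X'Xφ)^{-1}φ'] is a diagonal matrix. -/
open MeasureTheory ProbabilityTheory Matrix
open scoped NNReal

lemma pi_comp_measurePreserving {ι : Type*} [Fintype ι] {α : ι → Type*}
    [∀ i, MeasurableSpace (α i)] (ν : ∀ i, Measure (α i)) [∀ i, SigmaFinite (ν i)]
    (e : ∀ i, α i → α i) (he : ∀ i, MeasurePreserving (e i) (ν i) (ν i)) :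
    MeasurePreserving (fun (φ : ∀ i, α i) i => e i (φ i)) (Measure.pi ν) (Measure.pi ν) := by
  have hm : Measurable (fun (φ : ∀ i, α i) i => e i (φ i)) :=
    measurable_pi_lambda _ fun i => (he i).measurable.comp (measurable_pi_apply i)
  refine ⟨hm, ?_⟩
  refine (Measure.pi_eq fun s hs => ?_).symm
  rw [Measure.map_apply hm (MeasurableSet.univ_pi hs)]
  have : (fun (φ : ∀ i, α i) i => e i (φ i)) ⁻¹' Set.pi Set.univ s
      = Set.pi Set.univ (fun i => e i ⁻¹' s i) := by
    ext; simp [Set.mem_pi]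
  rw [this, Measure.pi_pi]
  refine Finset.prod_congr rfl fun i _ => ?_
  rw [← Measure.map_apply (he i).measurable (hs i), (he i).map_eq]

lemma gaussian_neg_pres (v : ℝ≥0) :
    MeasurePreserving (fun x : ℝ => -x) (gaussianReal 0 v) (gaussianReal 0 v) := by
  refine ⟨measurable_neg, ?_⟩
  have := gaussianReal_map_const_mul (μ := 0) (v := v) (-1)
  simp only [neg_one_mul, mul_zero] at this
  rw [this]
  congr 1
  ext : 1
  simp

/-- If `Σ = XᵀX` is diagonal and `φ` has i.i.d. `N(0,1/d)` entries (with
`rank X ≥ d` so that `φᵀXᵀXφ` is a.s. invertible), then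
`T = E_φ[φ(φᵀXᵀXφ)⁻¹φᵀ]` is a diagonal matrix. -/
theorem stmt7 (n p d : ℕ) (hd : 0 < d)
    (X : Matrix (Fin n) (Fin p) ℝ)
    (hdiag : (Xᵀ * X).IsDiag)
    (hrank : (d : ℕ) ≤ X.rank)
    (μ : Measure (Fin p → Fin d → ℝ))
    (hμ : μ = Measure.pi fun _ : Fin p => Measure.pi fun _ : Fin d =>
      gaussianReal 0 ((d : ℝ≥0))⁻¹) :
    Matrix.IsDiag (Matrix.of fun i j =>
      ∫ φ, (Matrix.of φ * ((Matrix.of φ)ᵀ * Xᵀ * X * Matrix.of φ)⁻¹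
        * (Matrix.of φ)ᵀ) i j ∂μ) := by
  intro i j hij
  simp only [Matrix.of_apply]
  subst hμ
  set v : ℝ≥0 := ((d : ℝ≥0))⁻¹
  -- the sign-flip map on row i
  set T : (Fin p → Fin d → ℝ) → (Fin p → Fin d → ℝ) :=
    fun φ k => if k = i then -(φ k) else φ k with hT
  set μ : Measure (Fin p → Fin d → ℝ) := Measure.pi fun _ : Fin p =>
    Measure.pi fun _ : Fin d => gaussianReal 0 v with hμdef
  -- negation on ℝ^d is measure preserving for the inner pi measure
  have hinner : MeasurePreserving (fun x : Fin d → ℝ => -x)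
      (Measure.pi fun _ : Fin d => gaussianReal 0 v)
      (Measure.pi fun _ : Fin d => gaussianReal 0 v) := by
    have := pi_comp_measurePreserving (fun _ : Fin d => gaussianReal 0 v)
      (fun _ => fun x : ℝ => -x) (fun _ => gaussian_neg_pres v)
    exact this
  -- T is measure preserving
  have hTpres : MeasurePreserving T μ μ := by
    have h := pi_comp_measurePreserving
      (fun _ : Fin p => Measure.pi fun _ : Fin d => gaussianReal 0 v)
      (fun k => if k = i then (fun x : Fin d → ℝ => -x) else id)
      (fun k => by
        by_cases hk : k = i
        · simpa [hk] using hinner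
        · simpa [hk] using MeasurePreserving.id _)
    have : T = fun (φ : Fin p → Fin d → ℝ) k =>
        (if k = i then (fun x : Fin d → ℝ => -x) else id) (φ k) := by
      funext φ k; by_cases hk : k = i <;> simp [hT, hk]
    rw [this]
    exact h
  -- T as a measurable equiv (it is an involution)
  have hTT : ∀ φ, T (T φ) = φ := by
    intro φ; funext k; by_cases hk : k = i <;> simp [hT, hk]
  let e : (Fin p → Fin d → ℝ) ≃ᵐ (Fin p → Fin d → ℝ) :=
    { toFun := T, invFun := T, left_inv := hTT, right_inv := hTT,
      measurable_toFun := hTpres.measurable,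
      measurable_invFun := hTpres.measurable }
  -- the integrand is odd under T
  set D : Matrix (Fin p) (Fin p) ℝ :=
    Matrix.diagonal (fun k => if k = i then (-1 : ℝ) else 1) with hD
  have hofT : ∀ φ : Fin p → Fin d → ℝ, Matrix.of (T φ) = D * Matrix.of φ := by
    intro φ; ext k l
    by_cases hk : k = i <;>
      simp [hT, hD, hk, Matrix.diagonal_mul]
  have hDt : Dᵀ = D := Matrix.diagonal_transpose _
  have hDAD : D * (Xᵀ * X) * D = Xᵀ * X := by
    ext a b
    rw [Matrix.mul_diagonal, Matrix.diagonal_mul]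
    by_cases hab : a = b
    · subst hab; by_cases ha : a = i <;> simp [ha]
    · simp [hdiag hab]
  have hodd : ∀ φ : Fin p → Fin d → ℝ,
      (Matrix.of (T φ) * ((Matrix.of (T φ))ᵀ * Xᵀ * X * Matrix.of (T φ))⁻¹
        * (Matrix.of (T φ))ᵀ) i j
      = - ((Matrix.of φ * ((Matrix.of φ)ᵀ * Xᵀ * X * Matrix.of φ)⁻¹
        * (Matrix.of φ)ᵀ) i j) := by
    intro φ
    set M := Matrix.of φ with hM
    have h1 : (Matrix.of (T φ))ᵀ = Mᵀ * D := by
      rw [hofT, Matrix.transpose_mul, hDt]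
    have h2 : (Matrix.of (T φ))ᵀ * Xᵀ * X * Matrix.of (T φ)
        = Mᵀ * Xᵀ * X * M := by
      rw [h1, hofT]
      calc Mᵀ * D * Xᵀ * X * (D * M)
          = Mᵀ * (D * (Xᵀ * X) * D) * M := by
            simp only [Matrix.mul_assoc]
        _ = Mᵀ * Xᵀ * X * M := by rw [hDAD]; simp only [Matrix.mul_assoc]
    rw [h2, h1, hofT]
    have h3 : D * M * (Mᵀ * Xᵀ * X * M)⁻¹ * (Mᵀ * D)
        = D * (M * (Mᵀ * Xᵀ * X * M)⁻¹ * Mᵀ) * D := by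
      simp only [Matrix.mul_assoc]
    rw [h3, Matrix.mul_diagonal, Matrix.diagonal_mul]
    have hji : ¬ j = i := fun h => hij h.symm
    simp [hji]
  -- conclude: the integral equals its own negation
  have hmap : Measure.map (⇑e) μ = μ := hTpres.map_eq
  have := MeasureTheory.integral_map_equiv (μ := μ) e
    (f := fun φ => (Matrix.of φ * ((Matrix.of φ)ᵀ * Xᵀ * X * Matrix.of φ)⁻¹
        * (Matrix.of φ)ᵀ) i j)
  rw [hmap] at this
  have heq : (∫ φ, (Matrix.of φ * ((Matrix.of φ)ᵀ * Xᵀ * X * Matrix.of φ)⁻¹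
        * (Matrix.of φ)ᵀ) i j ∂μ)
      = - ∫ φ, (Matrix.of φ * ((Matrix.of φ)ᵀ * Xᵀ * X * Matrix.of φ)⁻¹
        * (Matrix.of φ)ᵀ) i j ∂μ := by
    calc (∫ φ, (Matrix.of φ * ((Matrix.of φ)ᵀ * Xᵀ * X * Matrix.of φ)⁻¹
          * (Matrix.of φ)ᵀ) i j ∂μ)
        = ∫ φ, (Matrix.of (T φ) * ((Matrix.of (T φ))ᵀ * Xᵀ * X
            * Matrix.of (T φ))⁻¹ * (Matrix.of (T φ))ᵀ) i j ∂μ := this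
      _ = ∫ φ, -((Matrix.of φ * ((Matrix.of φ)ᵀ * Xᵀ * X * Matrix.of φ)⁻¹
            * (Matrix.of φ)ᵀ) i j) ∂μ := by simp only [hodd]
      _ = - ∫ φ, (Matrix.of φ * ((Matrix.of φ)ᵀ * Xᵀ * X * Matrix.of φ)⁻¹
            * (Matrix.of φ)ᵀ) i j ∂μ := integral_neg _
  linarith [heq]
end

section
/- Writing α_i = λ_i/trace(Σ), the shrinkage factor w_i = [(1+1/d)α² + (1+2/d)α + 1/d] / [(d+2+1/d)α² + 2(1+1/d)α + 1/d] is a strictly decreasing function of α on (0,1] for d ≥ 2; i.e., directions with larger eigenvalue are shrunk more strongly (smaller w). -/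
/-- For projection dimension `d ≥ 2`, the shrinkage factor
`w(α) = [(1+1/d)α² + (1+2/d)α + 1/d] / [(d+2+1/d)α² + 2(1+1/d)α + 1/d]`
is strictly decreasing in `α` on `(0,1]`: directions with larger eigenvalue are
shrunk more strongly. -/
theorem stmt14 (d : ℕ) (hd : 2 ≤ d)
    (w : ℝ → ℝ)
    (hw : ∀ α : ℝ, w α = ((1 + 1 / (d : ℝ)) * α ^ 2 + (1 + 2 / (d : ℝ)) * α + 1 / (d : ℝ))
      / (((d : ℝ) + 2 + 1 / (d : ℝ)) * α ^ 2 + 2 * (1 + 1 / (d : ℝ)) * α + 1 / (d : ℝ))) :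
    StrictAntiOn w (Set.Ioc (0 : ℝ) 1) := by
  intro x hx y hy hxy
  rw [hw, hw]
  have hc : (2 : ℝ) ≤ (d : ℝ) := by exact_mod_cast hd
  have hc0 : (0 : ℝ) < (d : ℝ) := by linarith
  have ha : (0 : ℝ) < 1 / (d : ℝ) := by positivity
  have hx0 : 0 < x := hx.1
  have hy0 : 0 < y := hy.1
  have hDx : 0 < ((d : ℝ) + 2 + 1 / (d : ℝ)) * x ^ 2 + 2 * (1 + 1 / (d : ℝ)) * x + 1 / (d : ℝ) := by
    positivity
  have hDy : 0 < ((d : ℝ) + 2 + 1 / (d : ℝ)) * y ^ 2 + 2 * (1 + 1 / (d : ℝ)) * y + 1 / (d : ℝ) := by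
    positivity
  rw [div_lt_div_iff₀ hDy hDx]
  have key : ((1 + 1 / (d : ℝ)) * x ^ 2 + (1 + 2 / (d : ℝ)) * x + 1 / (d : ℝ)) *
        (((d : ℝ) + 2 + 1 / (d : ℝ)) * y ^ 2 + 2 * (1 + 1 / (d : ℝ)) * y + 1 / (d : ℝ)) -
      ((1 + 1 / (d : ℝ)) * y ^ 2 + (1 + 2 / (d : ℝ)) * y + 1 / (d : ℝ)) *
        (((d : ℝ) + 2 + 1 / (d : ℝ)) * x ^ 2 + 2 * (1 + 1 / (d : ℝ)) * x + 1 / (d : ℝ)) =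
      (y - x) * (((d : ℝ) + 2 + 1 / (d : ℝ)) * (x * y) + (1 + 1 / (d : ℝ)) * (x + y)
        + 1 / (d : ℝ)) := by
    field_simp
    ring
  have hpos : 0 < (y - x) * (((d : ℝ) + 2 + 1 / (d : ℝ)) * (x * y) + (1 + 1 / (d : ℝ)) * (x + y)
      + 1 / (d : ℝ)) := by
    apply mul_pos (by linarith)
    have := mul_pos hx0 hy0
    positivity
  linarith
end

section
/- The MSE of the infinite-average compressed least squares estimator is always at most the MSE of a single compressed least squares estimator: σ²τ + Σβ_i²λ_i(1 − λ_i/η_i)² ≤ σ²d + Σβ_i²λ_i(1 − λ_i/η_i), where τ = Σ(λ_i/η_i)². -/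
open Finset

/-- The MSE of the infinite-average compressed least squares estimator is at
most the MSE of a single compressed least squares estimator:
`σ²τ + ∑βᵢ²λᵢ(1 − tᵢ)² ≤ σ²d + ∑βᵢ²λᵢ(1 − tᵢ)`, where `tᵢ = λᵢ/ηᵢ ∈ [0,1]`,
`∑tᵢ = d` and `τ = ∑tᵢ²`. -/
theorem stmt18 (p d : ℕ) (σ : ℝ)
    (lam : Fin p → ℝ) (hlam : ∀ i, 0 ≤ lam i)
    (β : Fin p → ℝ)
    (t : Fin p → ℝ) (ht : ∀ i, t i ∈ Set.Icc (0 : ℝ) 1)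
    (hsum : ∑ i, t i = (d : ℝ))
    (τ : ℝ) (hτ : τ = ∑ i, (t i) ^ 2) :
    σ ^ 2 * τ + ∑ i, (β i) ^ 2 * lam i * (1 - t i) ^ 2
      ≤ σ ^ 2 * d + ∑ i, (β i) ^ 2 * lam i * (1 - t i) := by
  have hτd : τ ≤ (d : ℝ) := by
    rw [hτ, ← hsum]
    apply Finset.sum_le_sum
    intro i _
    have h := ht i
    nlinarith [h.1, h.2]
  have h2 : ∑ i, (β i) ^ 2 * lam i * (1 - t i) ^ 2
      ≤ ∑ i, (β i) ^ 2 * lam i * (1 - t i) := by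
    apply Finset.sum_le_sum
    intro i _
    have h := ht i
    have key : 0 ≤ (β i) ^ 2 * lam i * ((1 - t i) * t i) :=
      mul_nonneg (mul_nonneg (sq_nonneg _) (hlam i))
        (mul_nonneg (by linarith [h.2]) h.1)
    nlinarith [key]
  nlinarith [sq_nonneg σ]
end
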